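/- arXiv:1105.5740 — 2 statements merged into one kernel-verified Lean document; each statement's English description precedes it below -/
import Mathlib

section
/- Boundedness of the walk (condition (B)): for P-a.e. ω there exists a positive integer N(ω) such that every P(ω)-nearest neighbor path (0 = x₀, x₁, …, x_n) starting at the origin satisfies |x₁|_∞ ≤ N(ω) and |x_n|_∞ ≤ 2^{n−1} N(ω) for all n ≥ 1. In particular, for P-a.e. ω and each n ≥ 0 there is a constant K(ω, n) with |X_n| ≤ K(ω, n), P_ω^0-almost surely. -/
/-!
A step of a nearest-neighbour path from `x` in direction `e` has length `γ_e(T_x ω)`. If, from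
some scale `N` on, every site of the box of radius `m` sees a point of the process within
distance `m` in each direction, then a step from a site of sup-norm at most `m ≥ N` lands at
sup-norm at most `2m`, and induction gives `|x_n|_∞ ≤ 2^(n-1) N`.

A segment of length `m` contains `⌊m / L⌋` sites that are `ℓ`-separated (`L ≥ ℓ`); by (A2) and
(A3) they are all vacant with probability `q^⌊m/L⌋`, where `q = Q(ω(0) = 0) < 1`. A long gap
somewhere in the box of radius `m` therefore has probability `O(m^d q^⌊m/L⌋)`, which is summable,
and Borel–Cantelli yields `N(ω)`. The quenched bound holds because `P_ω^0` is carried by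
nearest-neighbour paths.
-/

open MeasureTheory ProbabilityTheory Filter
open scoped ENNReal Topology

namespace RWDPP

attribute [local instance] Classical.propDecidable


/-- Configuration space `Ω = {0,1}^{ℤ^d}`. -/
abbrev Cfg (d : ℕ) := (Fin d → ℤ) → Bool

/-- Canonical shift `T_y ω (x) = ω (x + y)`. -/
def shift (d : ℕ) (y : Fin d → ℤ) (ω : Cfg d) : Cfg d := fun x => ω (x + y)

/-- Embedding of `ℤ^d` into `ℝ^d` (with the Euclidean norm). -/
def toE (d : ℕ) (x : Fin d → ℤ) : EuclideanSpace ℝ (Fin d) := WithLp.toLp 2 (fun i => (x i : ℝ))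

/-- Euclidean norm `|x|` of a lattice point. -/
noncomputable def nrm (d : ℕ) (x : Fin d → ℤ) : ℝ := ‖toE d x‖

/-- Sup norm `|x|_∞` of a lattice point. -/
def nrmInf (d : ℕ) (x : Fin d → ℤ) : ℕ := Finset.univ.sup fun i => (x i).natAbs

/-- The `2d` unit vectors of `ℤ^d`. -/
def unitVecs (d : ℕ) : Set (Fin d → ℤ) :=
  {e | ∃ i : Fin d, e = Pi.single i 1 ∨ e = Pi.single i (-1)}

/-- `γ_e(ω) = inf {k ≥ 1 : ω(k e) = 1}`. -/
noncomputable def gamma (d : ℕ) (e : Fin d → ℤ) (ω : Cfg d) : ℕ :=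
  sInf {k : ℕ | 1 ≤ k ∧ ω ((k : ℤ) • e) = true}

/-- The nearest neighbor of `x` in direction `e`: `x + γ_e(T_x ω) e`. -/
noncomputable def nbr (d : ℕ) (ω : Cfg d) (x e : Fin d → ℤ) : Fin d → ℤ :=
  x + (gamma d e (shift d x ω) : ℤ) • e

/-- The set `N_x(ω)` of the `2d` nearest neighbors of `x`. -/
noncomputable def nbrs (d : ℕ) (ω : Cfg d) (x : Fin d → ℤ) : Set (Fin d → ℤ) :=
  {y | ∃ e ∈ unitVecs d, y = nbr d ω x e}

/-- `(p 0, …, p m)` is a `𝒫(ω)`-nearest neighbor path. -/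
def IsPath (d : ℕ) (ω : Cfg d) (p : ℕ → Fin d → ℤ) (m : ℕ) : Prop :=
  ω (p 0) = true ∧ ∀ k, 1 ≤ k → k ≤ m → p k ∈ nbrs d ω (p (k - 1))

/-- The event `Ω₀ = {ω : ω(0) = 1}`. -/
def Omega0 (d : ℕ) : Set (Cfg d) := {ω | ω 0 = true}

/-- The σ-field generated by the coordinates in `A`. -/
def coordSigma (d : ℕ) (A : Set (Fin d → ℤ)) : MeasurableSpace (Cfg d) :=
  MeasurableSpace.comap (fun ω (x : A) => ω x) inferInstance

/-- Assumptions (A1)–(A3) on the law `Q` of the discrete point process. -/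
structure Assumptions (d : ℕ) (Q : Measure (Cfg d)) : Prop where
  prob : IsProbabilityMeasure Q
  a1_pos : 0 < Q (Omega0 d)
  a1_lt : Q (Omega0 d) < 1
  a2 : ∃ ℓ : ℝ, 0 < ℓ ∧ ∀ A B : Set (Fin d → ℤ),
    (∀ x ∈ A, ∀ y ∈ B, ℓ ≤ nrm d (x - y)) →
      Indep (coordSigma d A) (coordSigma d B) Q
  a3 : ∀ y : Fin d → ℤ, MeasurePreserving (shift d y) Q Q

/-- The conditioned measure `P = Q(·|Ω₀)`. -/
noncomputable def condP (d : ℕ) (Q : Measure (Cfg d)) : Measure (Cfg d) := Q[|Omega0 d]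

/-- One-step transition probability of the RWDPP. -/
noncomputable def stepP (d : ℕ) (ω : Cfg d) (x y : Fin d → ℤ) : ℝ :=
  if y ∈ nbrs d ω x then 1 / (2 * d) else 0

/-- Discrete trajectory space. -/
abbrev Traj (d : ℕ) := ℕ → Fin d → ℤ

/-- `μ` is the family of quenched laws `P_ω^z` of the RWDPP in the environment `ω`:
`μ z` is a probability measure with `μ z (X₀ = z) = 1` under which `(X_n)` is the Markov
chain with transition probability `1/(2d)` to each nearest neighbor. -/
def IsQuenchedLaw (d : ℕ) (ω : Cfg d) (μ : (Fin d → ℤ) → Measure (Traj d)) : Prop :=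
  (∀ z, IsProbabilityMeasure (μ z)) ∧
  ∀ z, ω z = true → ∀ n : ℕ, ∀ x : Traj d,
    μ z {p | ∀ k ≤ n, p k = x k} =
      (if x 0 = z then 1 else 0) *
        ∏ k ∈ Finset.range n, ENNReal.ofReal (stepP d ω (x k) (x (k + 1)))

/-- `P(N_{t} - N_{s} = k)` for a rate-one Poisson process, `r = t - s`. -/
noncomputable def poissonProb (r : ℝ) (k : ℕ) : ℝ≥0∞ :=
  ENNReal.ofReal (Real.exp (-r) * r ^ k / (Nat.factorial k))

/-- `ν` is the law of (the path of) a rate-one Poisson process `(N_t)_{t ≥ 0}`. -/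
def IsPoissonPath (ν : Measure (ℝ → ℕ)) : Prop :=
  IsProbabilityMeasure ν ∧
  (∀ᵐ η ∂ν, Monotone η ∧ ∀ t : ℝ, t ≤ 0 → η t = 0) ∧
  ∀ m : ℕ, ∀ t : ℕ → ℝ, 0 ≤ t 0 → Monotone t → ∀ k : ℕ → ℕ,
    ν {η | ∀ i < m, η (t (i + 1)) - η (t i) = k i} =
      ∏ i ∈ Finset.range m, poissonProb (t (i + 1) - t i) (k i)

/-- The continuous-time walk `Y_t = X_{N_t}`, realized on the product of the trajectory
space of the discrete walk and the path space of the Poisson process. -/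
def Yt (d : ℕ) (q : Traj d × (ℝ → ℕ)) (t : ℝ) : Fin d → ℤ := q.1 (q.2 t)

/-- `τ_n = inf {t ≥ 0 : |Y_t - Y_0| ≥ n}`. -/
noncomputable def hitTime (d : ℕ) (n : ℕ) (q : Traj d × (ℝ → ℕ)) : ℝ :=
  sInf {t : ℝ | 0 ≤ t ∧ (n : ℝ) ≤ nrm d (Yt d q t - Yt d q 0)}

/-- `max_{x ∈ 𝒫(ω), |x| ≤ n} g x` (Euclidean balls). -/
noncomputable def maxOn (d : ℕ) (ω : Cfg d) (g : (Fin d → ℤ) → ℝ) (n : ℕ) : ℝ :=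
  sSup {r : ℝ | ∃ x, ω x = true ∧ nrm d x ≤ (n : ℝ) ∧ r = g x}

/-- `max_{x ∈ 𝒫(ω), |x|_∞ ≤ n} g x` (sup-norm boxes). -/
noncomputable def maxOnInf (d : ℕ) (ω : Cfg d) (g : (Fin d → ℤ) → ℝ) (n : ℕ) : ℝ :=
  sSup {r : ℝ | ∃ x, ω x = true ∧ nrmInf d x ≤ n ∧ r = g x}

/-- The `2d` unit vectors, as a finite set. -/
noncomputable def unitFinset (d : ℕ) : Finset (Fin d → ℤ) :=
  (Finset.univ.image fun i : Fin d => (Pi.single i 1 : Fin d → ℤ)) ∪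
    (Finset.univ.image fun i : Fin d => (Pi.single i (-1) : Fin d → ℤ))

/-- `x ↦ x + ψ x` is harmonic on `𝒫(ω)` for the RWDPP transition probability. -/
def IsHarmonicDeform (d : ℕ) (ω : Cfg d) (ψ : (Fin d → ℤ) → EuclideanSpace ℝ (Fin d)) : Prop :=
  ∀ x, ω x = true →
    (1 / (2 * (d : ℝ))) • ∑ e ∈ unitFinset d, (toE d (nbr d ω x e) + ψ (nbr d ω x e))
      = toE d x + ψ x

/-- `‖(χ(x,·) - χ(y,·)) 1{x ∈ 𝒫} 1{y ∈ N_x}‖_{L²(P)}²`. -/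
noncomputable def corrL2sq (d : ℕ) (P : Measure (Cfg d))
    (χ : (Fin d → ℤ) → Cfg d → EuclideanSpace ℝ (Fin d)) (x y : Fin d → ℤ) : ℝ≥0∞ :=
  ∫⁻ ω, ENNReal.ofReal
    (if ω x = true ∧ y ∈ nbrs d ω x then ‖χ x ω - χ y ω‖ ^ 2 else 0) ∂P

/-- Graph distance on `𝒫(ω)` (`⊤` if not connected). -/
noncomputable def graphDist (d : ℕ) (ω : Cfg d) (x y : Fin d → ℤ) : ℕ∞ :=
  sInf {m : ℕ∞ | ∃ k : ℕ, m = (k : ℕ∞) ∧ ∃ p : Traj d, p 0 = x ∧ p k = y ∧ IsPath d ω p k}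

section Deterministic

variable {d : ℕ}

lemma natAbs_apply_le_nrmInf (x : Fin d → ℤ) (i : Fin d) : (x i).natAbs ≤ nrmInf d x :=
  Finset.le_sup (f := fun j => (x j).natAbs) (Finset.mem_univ i)

lemma nrmInf_le_iff {x : Fin d → ℤ} {m : ℕ} : nrmInf d x ≤ m ↔ ∀ i, (x i).natAbs ≤ m := by
  simp [nrmInf]

lemma nrmInf_add_le (x y : Fin d → ℤ) : nrmInf d (x + y) ≤ nrmInf d x + nrmInf d y :=
  nrmInf_le_iff.2 fun i => (Int.natAbs_add_le _ _).trans
    (add_le_add (natAbs_apply_le_nrmInf x i) (natAbs_apply_le_nrmInf y i))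

lemma natAbs_apply_le_one_of_mem_unitVecs {e : Fin d → ℤ} (he : e ∈ unitVecs d) (j : Fin d) :
    (e j).natAbs ≤ 1 := by
  obtain ⟨i, rfl | rfl⟩ := he <;> by_cases h : j = i <;> simp [h]

lemma nrmInf_smul_le_of_mem_unitVecs {e : Fin d → ℤ} (he : e ∈ unitVecs d) (c : ℤ) :
    nrmInf d (c • e) ≤ c.natAbs :=
  nrmInf_le_iff.2 fun j => by
    simpa [Int.natAbs_mul] using
      Nat.mul_le_mul_left c.natAbs (natAbs_apply_le_one_of_mem_unitVecs he j)

lemma nrmInf_nbr_le {ω : Cfg d} {x e : Fin d → ℤ} (he : e ∈ unitVecs d) :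
    nrmInf d (nbr d ω x e) ≤ nrmInf d x + gamma d e (shift d x ω) :=
  (nrmInf_add_le _ _).trans (Nat.add_le_add_left
    (by simpa using nrmInf_smul_le_of_mem_unitVecs he (gamma d e (shift d x ω) : ℤ)) _)

def GapsBoundedFrom (d : ℕ) (ω : Cfg d) (N : ℕ) : Prop :=
  ∀ m, N ≤ m → ∀ x : Fin d → ℤ, nrmInf d x ≤ m → ∀ e ∈ unitVecs d, gamma d e (shift d x ω) ≤ m

lemma GapsBoundedFrom.mono {ω : Cfg d} {N M : ℕ} (h : GapsBoundedFrom d ω N) (hNM : N ≤ M) :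
    GapsBoundedFrom d ω M :=
  fun m hm => h m (hNM.trans hm)

lemma GapsBoundedFrom.nrmInf_path_le {ω : Cfg d} {N n : ℕ} {p : Traj d}
    (h : GapsBoundedFrom d ω N) (hp0 : p 0 = 0) (hp : IsPath d ω p n) {k : ℕ} (hk : 1 ≤ k)
    (hkn : k ≤ n) : nrmInf d (p k) ≤ 2 ^ (k - 1) * N := by
  induction k, hk using Nat.le_induction with
  | base =>
    obtain ⟨e, he, hpe⟩ := hp.2 1 le_rfl hkn
    have hγ := h N le_rfl (p 0) (by simp [hp0, nrmInf]) e he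
    rw [hpe]
    calc nrmInf d (nbr d ω (p 0) e) ≤ nrmInf d (p 0) + N :=
          (nrmInf_nbr_le he).trans (Nat.add_le_add_left hγ _)
      _ = 2 ^ (1 - 1) * N := by simp [hp0, nrmInf]
  | succ k hk ih =>
    obtain ⟨e, he, hpe⟩ := hp.2 (k + 1) (by omega) hkn
    have hpk := ih (by omega)
    have hγ := h _ (Nat.le_mul_of_pos_left N (by positivity)) (p k) hpk e he
    rw [hpe, Nat.add_sub_cancel]
    calc nrmInf d (nbr d ω (p k) e) ≤ 2 ^ (k - 1) * N + 2 ^ (k - 1) * N :=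
          (nrmInf_nbr_le he).trans (add_le_add hpk hγ)
      _ = 2 ^ k * N := by rw [← two_mul, ← mul_assoc, ← pow_succ', Nat.sub_add_cancel hk]

end Deterministic

section Norms

variable {d : ℕ}

lemma toE_single (i : Fin d) (a : ℤ) : toE d (Pi.single i a) = EuclideanSpace.single i (a : ℝ) :=
  PiLp.ext fun j => by by_cases h : j = i <;> simp [toE, h]

lemma nrm_smul_of_mem_unitVecs {e : Fin d → ℤ} (he : e ∈ unitVecs d) (c : ℤ) :
    nrm d (c • e) = |(c : ℝ)| := by
  obtain ⟨i, rfl | rfl⟩ := he <;> simp [nrm, ← Pi.single_smul, toE_single]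

lemma nrm_le_sqrt_mul_nrmInf (x : Fin d → ℤ) : nrm d x ≤ √d * nrmInf d x := by
  rw [nrm, EuclideanSpace.norm_eq, ← Real.sqrt_sq (Nat.cast_nonneg (nrmInf d x)),
    ← Real.sqrt_mul (Nat.cast_nonneg d)]
  refine Real.sqrt_le_sqrt ?_
  calc ∑ i, ‖toE d x i‖ ^ 2 ≤ ∑ _i : Fin d, (nrmInf d x : ℝ) ^ 2 := by
        gcongr with i
        simpa [toE, Nat.cast_natAbs] using (Nat.cast_le (α := ℝ)).2 (natAbs_apply_le_nrmInf x i)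
    _ = d * (nrmInf d x : ℝ) ^ 2 := by simp

end Norms

def emptySegment (d : ℕ) (x e : Fin d → ℤ) (m : ℕ) : Set (Cfg d) :=
  {ω | ∀ k : ℕ, 1 ≤ k → k ≤ m → ω (x + (k : ℤ) • e) = false}

noncomputable def box (d m : ℕ) : Finset (Fin d → ℤ) :=
  Finset.Icc (fun _ => -(m : ℤ)) (fun _ => (m : ℤ))

def longGapEvent (d m : ℕ) : Set (Cfg d) :=
  ⋃ x ∈ box d m, ⋃ e ∈ unitFinset d, emptySegment d x e m

section Gaps

variable {d : ℕ}

lemma card_box (m : ℕ) : (box d m).card = (2 * m + 1) ^ d := by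
  simp only [box, Pi.card_Icc, Int.card_Icc, Finset.prod_const, Finset.card_univ, Fintype.card_fin]
  congr 1
  omega

lemma mem_box_of_nrmInf_le {x : Fin d → ℤ} {m : ℕ} (hx : nrmInf d x ≤ m) : x ∈ box d m := by
  simp only [box, Finset.mem_Icc, Pi.le_def]
  have := nrmInf_le_iff.1 hx
  exact ⟨fun i => by have := this i; omega, fun i => by have := this i; omega⟩

lemma mem_unitFinset_iff {e : Fin d → ℤ} : e ∈ unitFinset d ↔ e ∈ unitVecs d := by
  simp only [unitFinset, unitVecs, Finset.mem_union, Finset.mem_image, Finset.mem_univ, true_and,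
    Set.mem_ofPred_eq, exists_or, eq_comm]

lemma gamma_le_of_notMem_emptySegment {ω : Cfg d} {x e : Fin d → ℤ} {m : ℕ}
    (h : ω ∉ emptySegment d x e m) : gamma d e (shift d x ω) ≤ m := by
  obtain ⟨k, hk1, hkm, hk⟩ : ∃ k, 1 ≤ k ∧ k ≤ m ∧ ω (x + (k : ℤ) • e) = true := by
    simpa [emptySegment] using h
  exact (Nat.sInf_le (s := {k : ℕ | 1 ≤ k ∧ shift d x ω ((k : ℤ) • e) = true})
    ⟨hk1, by simpa [shift, add_comm] using hk⟩).trans hkm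

lemma gapsBoundedFrom_of_eventually_notMem {ω : Cfg d} {N : ℕ}
    (h : ∀ m, N ≤ m → ω ∉ longGapEvent d m) : GapsBoundedFrom d ω N :=
  fun m hm _ hx _ he => gamma_le_of_notMem_emptySegment fun hω =>
    h m hm (Set.mem_biUnion (mem_box_of_nrmInf_le hx)
      (Set.mem_biUnion (mem_unitFinset_iff.2 he) hω))

end Gaps

/-- The finite-range dependence (A2) at range `ℓ`. -/
def IndepAtRange (d : ℕ) (Q : Measure (Cfg d)) (ℓ : ℝ) : Prop :=
  ∀ A B : Set (Fin d → ℤ), (∀ x ∈ A, ∀ y ∈ B, ℓ ≤ nrm d (x - y)) →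
    Indep (coordSigma d A) (coordSigma d B) Q

section Independence

variable {d : ℕ} {Q : Measure (Cfg d)} {ℓ : ℝ}

lemma measurableSet_coord_eq (y : Fin d → ℤ) (b : Bool) : MeasurableSet {ω : Cfg d | ω y = b} :=
  measurableSet_eq_fun (measurable_pi_apply y) measurable_const

lemma measurableSet_omega0 : MeasurableSet (Omega0 d) :=
  measurableSet_coord_eq 0 true

lemma measurableSet_coordSigma_forall_false (s : Finset (Fin d → ℤ)) :
    MeasurableSet[coordSigma d s] {ω : Cfg d | ∀ a ∈ s, ω a = false} :=
  ⟨{fun _ => false}, measurableSet_singleton _, by ext ω; simp [funext_iff]⟩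

lemma measure_coord_eq (hstat : ∀ y, MeasurePreserving (shift d y) Q Q) (y : Fin d → ℤ)
    (b : Bool) : Q {ω | ω y = b} = Q {ω | ω 0 = b} := by
  rw [← (hstat y).measure_preimage (measurableSet_coord_eq 0 b).nullMeasurableSet]
  simp [shift]

lemma measure_forall_false_of_separated [IsProbabilityMeasure Q]
    (hind : IndepAtRange d Q ℓ)
    (hstat : ∀ y, MeasurePreserving (shift d y) Q Q) (s : Finset (Fin d → ℤ))
    (hs : ∀ x ∈ s, ∀ y ∈ s, x ≠ y → ℓ ≤ nrm d (x - y)) :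
    Q {ω | ∀ a ∈ s, ω a = false} = Q {ω | ω 0 = false} ^ s.card := by
  induction s using Finset.induction_on with
  | empty => simp
  | insert a s ha ih =>
    have hsplit : {ω : Cfg d | ∀ b ∈ insert a s, ω b = false} =
        {ω | ∀ b ∈ ({a} : Finset _), ω b = false} ∩ {ω | ∀ b ∈ s, ω b = false} := by
      ext ω; simp
    have hindep : Indep (coordSigma d ({a} : Finset _)) (coordSigma d s) Q :=
      hind _ _ fun x hx y hy => by
        rw [Finset.coe_singleton, Set.mem_singleton_iff] at hx
        subst hx
        exact hs _ (Finset.mem_insert_self _ _) y (Finset.mem_insert_of_mem hy)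
          (fun h => ha (h ▸ hy))
    rw [hsplit, (Indep_iff _ _ Q).1 hindep _ _ (measurableSet_coordSigma_forall_false _)
      (measurableSet_coordSigma_forall_false _),
      ih fun x hx y hy => hs x (Finset.mem_insert_of_mem hx) y (Finset.mem_insert_of_mem hy),
      Finset.card_insert_of_notMem ha, pow_succ']
    simp [measure_coord_eq hstat a]

lemma measure_emptySegment_le [IsProbabilityMeasure Q]
    (hind : IndepAtRange d Q ℓ)
    (hstat : ∀ y, MeasurePreserving (shift d y) Q Q) {L : ℕ} (hL : 0 < L) (hℓL : ℓ ≤ L)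
    (x : Fin d → ℤ) {e : Fin d → ℤ} (he : e ∈ unitVecs d) (m : ℕ) :
    Q (emptySegment d x e m) ≤ Q {ω | ω 0 = false} ^ (m / L) := by
  set f : ℕ → Fin d → ℤ := fun j => x + ((j * L : ℕ) : ℤ) • e
  have hdist : ∀ i j, nrm d (f i - f j) = |(i : ℝ) - j| * L := by
    intro i j
    rw [show f i - f j = ((i * L : ℕ) - (j * L : ℕ) : ℤ) • e by simp [f, sub_smul],
      nrm_smul_of_mem_unitVecs he]
    push_cast
    rw [← sub_mul, abs_mul, Nat.abs_cast]
  have hsep : ∀ i j, i ≠ j → (L : ℝ) ≤ nrm d (f i - f j) := by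
    intro i j hij
    have h1 : (1 : ℝ) ≤ |(i : ℝ) - j| := by
      have : (1 : ℤ) ≤ |(i : ℤ) - j| := Int.one_le_abs (by omega)
      exact_mod_cast this
    rw [hdist]
    nlinarith
  have hinj : Set.InjOn f (Finset.Icc 1 (m / L) : Set ℕ) := fun i _ j _ hfij => by
    by_contra hij
    have := hsep i j hij
    rw [hfij, hdist] at this
    simp at this
    omega
  set s := (Finset.Icc 1 (m / L)).image f
  have hsub : emptySegment d x e m ⊆ {ω | ∀ a ∈ s, ω a = false} := by
    rintro ω hω a ha
    obtain ⟨j, hj, rfl⟩ := Finset.mem_image.1 ha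
    rw [Finset.mem_Icc] at hj
    exact hω (j * L) (Nat.mul_pos hj.1 hL)
      ((Nat.mul_le_mul_right L hj.2).trans (Nat.div_mul_le_self m L))
  calc Q (emptySegment d x e m) ≤ Q {ω | ∀ a ∈ s, ω a = false} := measure_mono hsub
    _ = Q {ω | ω 0 = false} ^ (m / L) := by
      rw [measure_forall_false_of_separated hind hstat s ?_, Finset.card_image_of_injOn hinj,
        Nat.card_Icc, Nat.add_sub_cancel]
      intro a ha b hb hab
      obtain ⟨i, -, rfl⟩ := Finset.mem_image.1 ha
      obtain ⟨j, -, rfl⟩ := Finset.mem_image.1 hb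
      exact hℓL.trans (hsep i j fun h => hab (h ▸ rfl))

lemma measure_longGapEvent_le [IsProbabilityMeasure Q]
    (hind : IndepAtRange d Q ℓ)
    (hstat : ∀ y, MeasurePreserving (shift d y) Q Q) {L : ℕ} (hL : 0 < L) (hℓL : ℓ ≤ L)
    (m : ℕ) :
    Q (longGapEvent d m) ≤
      ((2 * m + 1) ^ d * (unitFinset d).card : ℕ) * Q {ω | ω 0 = false} ^ (m / L) :=
  calc Q (longGapEvent d m)
      ≤ ∑ x ∈ box d m, ∑ e ∈ unitFinset d, Q (emptySegment d x e m) :=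
        (measure_biUnion_finset_le _ _).trans
          (Finset.sum_le_sum fun x _ => measure_biUnion_finset_le _ _)
    _ ≤ ∑ x ∈ box d m, ∑ e ∈ unitFinset d, Q {ω | ω 0 = false} ^ (m / L) := by
        gcongr with x _ e he
        exact measure_emptySegment_le hind hstat hL hℓL x (mem_unitFinset_iff.1 he) m
    _ = _ := by simp [card_box, mul_assoc]

end Independence

lemma summable_pow_mul_pow_div {q : ℝ} (hq0 : 0 < q) (hq1 : q < 1) {L : ℕ} (hL : 0 < L)
    (k : ℕ) : Summable fun m : ℕ => ((2 * m + 1 : ℕ) : ℝ) ^ k * q ^ (m / L) := by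
  set ρ : ℝ := q ^ ((L : ℝ)⁻¹)
  have hρ0 : 0 < ρ := Real.rpow_pos_of_pos hq0 _
  have hρ1 : ρ < 1 := Real.rpow_lt_one hq0.le hq1 (by positivity)
  -- `ρ ^ L = q` and `m < L * (m / L + 1)`
  have hgeom : ∀ m, q ^ (m / L) ≤ ρ ^ m / q := fun m => by
    rw [le_div_iff₀ hq0, ← pow_succ, ← Real.rpow_inv_natCast_pow hq0.le hL.ne', ← pow_mul]
    exact pow_le_pow_of_le_one hρ0.le hρ1.le (Nat.lt_mul_div_succ m hL).le
  have hρk : Summable fun m : ℕ => (m : ℝ) ^ k * ρ ^ m :=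
    summable_pow_mul_geometric_of_norm_lt_one k (by rwa [Real.norm_eq_abs, abs_of_pos hρ0])
  refine (hρk.mul_left (3 ^ k / q)).of_norm_bounded_eventually_nat ?_
  filter_upwards [eventually_ge_atTop 1] with m hm
  rw [Real.norm_of_nonneg (by positivity)]
  calc ((2 * m + 1 : ℕ) : ℝ) ^ k * q ^ (m / L) ≤ (3 * m : ℝ) ^ k * (ρ ^ m / q) := by
        gcongr
        · push_cast
          have : (1 : ℝ) ≤ m := by exact_mod_cast hm
          linarith
        · exact hgeom m
    _ = 3 ^ k / q * (m ^ k * ρ ^ m) := by ring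

section Borel

variable {d : ℕ} {Q : Measure (Cfg d)}

lemma Assumptions.ae_gapsBoundedFrom (hQ : Assumptions d Q) :
    ∀ᵐ ω ∂Q, ∃ N, GapsBoundedFrom d ω N := by
  have := hQ.prob
  obtain ⟨ℓ, -, hind⟩ := hQ.a2
  obtain ⟨L, hL, hℓL⟩ : ∃ L : ℕ, 0 < L ∧ ℓ ≤ L :=
    ⟨⌈ℓ⌉₊ + 1, Nat.succ_pos _, (Nat.le_ceil ℓ).trans (by simp)⟩
  set q := Q.real {ω : Cfg d | ω 0 = false}
  have hq : q = 1 - Q.real (Omega0 d) := by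
    have hcompl : {ω : Cfg d | ω 0 = false} = (Omega0 d)ᶜ := by ext ω; simp [Omega0]
    rw [← probReal_compl_eq_one_sub measurableSet_omega0, ← hcompl]
  have hq0 : 0 < q := by
    rw [hq, sub_pos, measureReal_def]
    exact ENNReal.toReal_lt_of_lt_ofReal (by simpa using hQ.a1_lt)
  have hq1 : q < 1 := by
    rw [hq, sub_lt_self_iff, measureReal_def]
    exact ENNReal.toReal_pos hQ.a1_pos.ne' (measure_ne_top _ _)
  have hsum := (summable_pow_mul_pow_div hq0 hq1 hL d).mul_right ((unitFinset d).card : ℝ)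
  have hfin : ∑' m, Q (longGapEvent d m) ≠ ⊤ := by
    refine ne_top_of_le_ne_top ENNReal.ofReal_ne_top (b := ENNReal.ofReal
      (∑' m : ℕ, ((2 * m + 1 : ℕ) : ℝ) ^ d * q ^ (m / L) * (unitFinset d).card)) ?_
    rw [ENNReal.ofReal_tsum_of_nonneg (fun m => by positivity) hsum]
    refine ENNReal.tsum_le_tsum fun m =>
      (measure_longGapEvent_le hind hQ.a3 hL hℓL m).trans_eq ?_
    rw [← ofReal_measureReal, ← ENNReal.ofReal_pow hq0.le, ← ENNReal.ofReal_natCast,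
      ← ENNReal.ofReal_mul (by positivity)]
    push_cast
    ring_nf
  filter_upwards [ae_eventually_notMem hfin] with ω hω
  obtain ⟨N, hN⟩ := eventually_atTop.1 hω
  exact ⟨N, gapsBoundedFrom_of_eventually_notMem hN⟩

end Borel

section Quenched

variable {d : ℕ} {ω : Cfg d} {μ : (Fin d → ℤ) → Measure (Traj d)} {z : Fin d → ℤ}

lemma IsQuenchedLaw.measure_cylinder_eq_zero (hμ : IsQuenchedLaw d ω μ) (hz : ω z = true)
    {n : ℕ} {x : Traj d} (hx : ¬(x 0 = z ∧ ∀ k < n, x (k + 1) ∈ nbrs d ω (x k))) :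
    μ z {p | ∀ k ≤ n, p k = x k} = 0 := by
  rw [hμ.2 z hz n x]
  by_cases h0 : x 0 = z
  · obtain ⟨k, hk, hstep⟩ : ∃ k < n, x (k + 1) ∉ nbrs d ω (x k) := by
      simpa [h0] using hx
    rw [Finset.prod_eq_zero (Finset.mem_range.2 hk) (by simp [stepP, hstep]), mul_zero]
  · rw [if_neg h0, zero_mul]

lemma IsQuenchedLaw.ae_mem_nbrs (hμ : IsQuenchedLaw d ω μ) (hz : ω z = true) :
    ∀ᵐ p ∂μ z, p 0 = z ∧ ∀ k, p (k + 1) ∈ nbrs d ω (p k) := by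
  have hfinite : ∀ n, ∀ᵐ p ∂μ z, p 0 = z ∧ ∀ k < n, p (k + 1) ∈ nbrs d ω (p k) := by
    intro n
    set bad : Set (Traj d) := {p | ¬(p 0 = z ∧ ∀ k < n, p (k + 1) ∈ nbrs d ω (p k))}
    -- there are countably many prefixes `(p 0, …, p n)`, and the cylinder of a bad one is null
    have hcover :
        bad ⊆ ⋃ v : Fin (n + 1) → Fin d → ℤ, bad ∩ {p | (fun k : Fin (n + 1) => p k) = v} :=
      fun p hp => Set.mem_iUnion.2 ⟨_, hp, rfl⟩
    refine measure_mono_null hcover (measure_iUnion_null fun v => ?_)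
    rcases (bad ∩ {p | (fun k : Fin (n + 1) => p k) = v}).eq_empty_or_nonempty
      with h | ⟨x, hx, hxv⟩
    · rw [h, measure_empty]
    · refine measure_mono_null (fun p hp => ?_) (hμ.measure_cylinder_eq_zero hz hx)
      intro k hk
      exact (congrFun hp.2 ⟨k, by omega⟩).trans (congrFun hxv ⟨k, by omega⟩).symm
  filter_upwards [ae_all_iff.2 hfinite] with p hp
  exact ⟨(hp 0).1, fun k => (hp (k + 1)).2 k k.lt_succ_self⟩

lemma IsQuenchedLaw.ae_isPath (hμ : IsQuenchedLaw d ω μ) (hz : ω z = true) (n : ℕ) :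
    ∀ᵐ p ∂μ z, p 0 = z ∧ IsPath d ω p n := by
  filter_upwards [hμ.ae_mem_nbrs hz] with p ⟨hp0, hstep⟩
  refine ⟨hp0, hp0 ▸ hz, fun k hk _ => ?_⟩
  simpa [Nat.sub_add_cancel hk] using hstep (k - 1)

end Quenched

theorem condition_B_general (d : ℕ)
    (Q : Measure (Cfg d)) (hQ : Assumptions d Q) :
    ∀ᵐ ω ∂condP d Q, ∃ N : ℕ, 1 ≤ N ∧
      (∀ (n : ℕ) (p : Traj d), 1 ≤ n → p 0 = 0 → IsPath d ω p n →
        nrmInf d (p 1) ≤ N ∧ nrmInf d (p n) ≤ 2 ^ (n - 1) * N) ∧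
      ∀ μ : (Fin d → ℤ) → Measure (Traj d), IsQuenchedLaw d ω μ →
        ∀ n : ℕ, ∃ K : ℝ, μ 0 {p | nrm d (p n) ≤ K} = 1 := by
  filter_upwards [cond_absolutelyContinuous.ae_le hQ.ae_gapsBoundedFrom,
    ae_cond_mem measurableSet_omega0] with ω ⟨N₀, hN₀⟩ hω0
  set N := max N₀ 1
  have hN : GapsBoundedFrom d ω N := hN₀.mono (le_max_left N₀ 1)
  refine ⟨N, le_max_right N₀ 1, fun n p hn hp0 hp =>
    ⟨by simpa using hN.nrmInf_path_le hp0 hp le_rfl hn, hN.nrmInf_path_le hp0 hp hn le_rfl⟩,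
    fun μ hμ n => ⟨√d * (2 ^ n * N : ℕ), ?_⟩⟩
  have := hμ.1 0
  refine (measure_congr (ae_eq_univ.2 (mem_ae_iff.1 ?_))).trans measure_univ
  filter_upwards [hμ.ae_isPath hω0 n] with p ⟨hp0, hp⟩
  refine (nrm_le_sqrt_mul_nrmInf _).trans
    (mul_le_mul_of_nonneg_left (Nat.cast_le.2 ?_) (by positivity))
  rcases Nat.eq_zero_or_pos n with rfl | hn
  · simp [hp0, nrmInf]
  · exact (hN.nrmInf_path_le hp0 hp hn le_rfl).trans
      (Nat.mul_le_mul_right N (Nat.pow_le_pow_right two_pos (Nat.sub_le n 1)))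

/-- **condition (B).** For `P`-a.e. `ω` there is `N(ω) ≥ 1` such that every
`𝒫(ω)`-nearest neighbor path `(0 = x₀, x₁, …, x_n)` started at the origin satisfies
`|x₁|_∞ ≤ N(ω)` and `|x_n|_∞ ≤ 2^(n-1) N(ω)` for all `n ≥ 1`.  In particular, for each
`n ≥ 0` there is a constant `K(ω, n)` with `|X_n| ≤ K(ω, n)`, `P_ω^0`-a.s. -/
theorem condition_B (d : ℕ) (hd : 1 ≤ d)
    (Q : Measure (Cfg d)) (hQ : Assumptions d Q) :
    ∀ᵐ ω ∂condP d Q, ∃ N : ℕ, 1 ≤ N ∧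
      (∀ (n : ℕ) (p : Traj d), 1 ≤ n → p 0 = 0 → IsPath d ω p n →
        nrmInf d (p 1) ≤ N ∧ nrmInf d (p n) ≤ 2 ^ (n - 1) * N) ∧
      ∀ μ : (Fin d → ℤ) → Measure (Traj d), IsQuenchedLaw d ω μ →
        ∀ n : ℕ, ∃ K : ℝ, μ 0 {p | nrm d (p n) ≤ K} = 1 :=
  condition_B_general d Q hQ

end RWDPP
end

section
/- Chernoff bound for blocked vertical columns (case d = 2): let 0 < δ < Q(Ω₀), 0 < δ₁ < δ, and suppose 0 < δ₂ < 1 and L ≥ 2ℓ − 1 are chosen so that 1 − δ₁ ≤ (1 − δ₂) Q(Λ₀(0, L)). Then for every u ∈ Z and every integer n > (1/2)( (1−δ₁)ℓ/(δ−δ₁) − 1 ), Q( Λ₁(u, δ, L, n)^c ) ≤ ℓ · exp{ −(δ₂² Q(Λ₀(0, L)) / 2) · ⌊(2n+1)/ℓ⌋ }. -/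
/-!
Split the columns `-n, …, n` into the `ℓ` residue classes mod `ℓ`, keeping
`m = ⌊(2n+1)/ℓ⌋` columns of each. Columns in one class are `ℓ` apart, so by (A2) the events
`T_{ie₁}ω ∈ Λ₀(u, L)` along a class are independent, and by (A3) each has probability
`q = Q(Λ₀(0, L))`. The exponential Chernoff bound at `t = log (1 - δ₂)` shows that a class has at
most `(1 - δ₂)qm` such columns with probability at most `exp(-δ₂²qm/2)`. If no class is that bad,
at least `ℓ(1 - δ₂)qm ≥ (1 - δ₁)ℓm > (1 - δ)(2n+1)` columns qualify; the last inequality is where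
the lower bound on `n` enters. A union bound over the `ℓ` classes finishes the proof.
-/

open MeasureTheory ProbabilityTheory Filter
open scoped ENNReal Topology

namespace RWDPP

attribute [local instance] Classical.propDecidable


/-- The unit vectors `e₁, e₂` of `ℤ²`. -/
def e1 : Fin 2 → ℤ := ![1, 0]
def e2 : Fin 2 → ℤ := ![0, 1]

/-- `Λ₀(u, L) = {ω : ω((u - j)e₂) = 1 for some 1 ≤ j ≤ L}`. -/
def Lam0 (u : ℤ) (L : ℕ) : Set (Cfg 2) :=
  {ω | ∃ j : ℕ, 1 ≤ j ∧ j ≤ L ∧ ω ((u - (j : ℤ)) • e2) = true}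

/-- `Λ₁(u, δ, L, n) = {(2n+1)^{-1} Σ_{i=-n}^{n} 1_{Λ₀(u,L)} ∘ T_{i e₁} > 1 - δ}`. -/
def Lam1 (u : ℤ) (δ : ℝ) (L n : ℕ) : Set (Cfg 2) :=
  {ω | (1 - δ) * (2 * (n : ℝ) + 1) <
    (Nat.card {i : ℤ | -(n : ℤ) ≤ i ∧ i ≤ (n : ℤ) ∧ shift 2 (i • e1) ω ∈ Lam0 u L} : ℝ)}

open Finset

section Chernoff

variable {Ω ι : Type*} {mΩ : MeasurableSpace Ω} {μ : Measure Ω}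

lemma iIndep_of_indep_biSup [IsProbabilityMeasure μ] {m : ι → MeasurableSpace Ω}
    (h : ∀ (s : Finset ι) (i : ι), i ∉ s → Indep (m i) (⨆ j ∈ s, m j) μ) : iIndep m μ := by
  refine (iIndep_iff m μ).2 fun s => ?_
  induction s using Finset.induction_on with
  | empty => simp
  | insert i s hi ih =>
    intro f hf
    have hs : MeasurableSet[⨆ j ∈ s, m j] (⋂ j ∈ s, f j) :=
      MeasurableSet.biInter s.countable_toSet fun j hj =>
        le_iSup₂ (f := fun j (_ : j ∈ s) => m j) j hj _ (hf j (mem_insert_of_mem hj))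
    rw [set_biInter_insert, (Indep_iff _ _ _).1 (h s i hi) _ _ (hf i (mem_insert_self i s)) hs,
      ih fun j hj => hf j (mem_insert_of_mem hj), prod_insert hi]

lemma mgf_indicator_one [IsProbabilityMeasure μ] {E : Set Ω} (hE : MeasurableSet E) (t : ℝ) :
    mgf (E.indicator 1) μ t = 1 + μ.real E * (Real.exp t - 1) := by
  have : (fun ω => Real.exp (t * E.indicator 1 ω))
      = fun ω => 1 + E.indicator (fun _ => Real.exp t - 1) ω := by
    funext ω; by_cases hω : ω ∈ E <;> simp [hω]
  rw [mgf, this, integral_add (integrable_const _) ((integrable_const _).indicator hE),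
    integral_const, integral_indicator_const _ hE]
  simp [mul_comm]

lemma sq_div_two_le_add_one_sub_mul_log_one_sub {x : ℝ} (hx0 : 0 ≤ x) (hx1 : x < 1) :
    x ^ 2 / 2 ≤ x + (1 - x) * Real.log (1 - x) := by
  have hy : 0 < 1 - x := by linarith
  -- `s ≤ sinh s` at `s = -log (1 - x) ≥ 0`
  have hs := Real.self_le_sinh_iff.2 (neg_nonneg.2 (Real.log_nonpos hy.le (by linarith)))
  rw [Real.sinh_eq, neg_neg, Real.exp_neg, Real.exp_log hy] at hs
  have := mul_le_mul_of_nonneg_left hs hy.le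
  field_simp at this
  nlinarith

theorem measureReal_card_le_le_exp {E : ι → Set Ω} (hE : iIndepSet E μ)
    (hEm : ∀ i, MeasurableSet (E i)) {q : ℝ} (hq : ∀ i, μ.real (E i) = q) (s : Finset ι)
    {δ : ℝ} (hδ0 : 0 ≤ δ) (hδ1 : δ < 1) :
    μ.real {ω | (#{i ∈ s | ω ∈ E i} : ℝ) ≤ (1 - δ) * q * #s}
      ≤ Real.exp (-(δ ^ 2 * q / 2) * #s) := by
  have := hE.isProbabilityMeasure
  rcases s.eq_empty_or_nonempty with rfl | ⟨i₀, -⟩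
  · simp
  have hq0 : 0 ≤ q := hq i₀ ▸ measureReal_nonneg
  have hq1 : q ≤ 1 := hq i₀ ▸ measureReal_le_one
  set X : ι → Ω → ℝ := fun i => (E i).indicator 1
  have hX : ∀ i, Measurable (X i) := fun i => measurable_const.indicator (hEm i)
  have hcount : ∀ ω, (#{i ∈ s | ω ∈ E i} : ℝ) = (∑ i ∈ s, X i) ω := by
    intro ω
    simp only [natCast_card_filter, Finset.sum_apply, X, Set.indicator_apply, Pi.one_apply]
  have ht : Real.log (1 - δ) ≤ 0 := Real.log_nonpos (by linarith) (by linarith)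
  have hmgf : mgf (∑ i ∈ s, X i) μ (Real.log (1 - δ)) = (1 - q * δ) ^ #s := by
    have hXind : iIndepFun X μ := hE.iIndepFun_indicator
    rw [hXind.mgf_sum hX, prod_congr rfl fun i _ => ?_, prod_const]
    rw [mgf_indicator_one (hEm i), hq, Real.exp_log (by linarith)]
    ring
  have hint : Integrable (fun ω => Real.exp (Real.log (1 - δ) * (∑ i ∈ s, X i) ω)) μ := by
    refine .of_bound (by fun_prop) 1 (ae_of_all _ fun ω => ?_)
    have : 0 ≤ (∑ i ∈ s, X i) ω := by rw [← hcount]; positivity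
    rw [Real.norm_eq_abs, abs_of_pos (Real.exp_pos _), Real.exp_le_one_iff]
    exact mul_nonpos_of_nonpos_of_nonneg ht this
  calc μ.real {ω | (#{i ∈ s | ω ∈ E i} : ℝ) ≤ (1 - δ) * q * #s}
      = μ.real {ω | (∑ i ∈ s, X i) ω ≤ (1 - δ) * q * #s} := by simp_rw [hcount]
    _ ≤ Real.exp (-Real.log (1 - δ) * ((1 - δ) * q * #s)) * (1 - q * δ) ^ #s :=
      hmgf ▸ measure_le_le_exp_mul_mgf _ ht hint
    _ ≤ Real.exp (-Real.log (1 - δ) * ((1 - δ) * q * #s)) * Real.exp (-(q * δ)) ^ #s := by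
      gcongr
      · nlinarith
      · exact Real.one_sub_le_exp_neg _
    _ = Real.exp (-(q * #s) * (δ + (1 - δ) * Real.log (1 - δ))) := by
      rw [← Real.exp_nat_mul, ← Real.exp_add]
      ring_nf
    _ ≤ Real.exp (-(δ ^ 2 * q / 2) * #s) := by
      refine Real.exp_le_exp.2 ?_
      nlinarith [sq_div_two_le_add_one_sub_mul_log_one_sub hδ0 hδ1,
        mul_nonneg hq0 (Nat.cast_nonneg (α := ℝ) #s)]

end Chernoff

section Columns

variable {d : ℕ}

lemma abs_apply_le_nrm (x : Fin d → ℤ) (i : Fin d) : |(x i : ℝ)| ≤ nrm d x := by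
  simpa [nrm, toE] using PiLp.norm_apply_le (toE d x) i

lemma coordSigma_le (A : Set (Fin d → ℤ)) : coordSigma d A ≤ MeasurableSpace.pi :=
  Measurable.comap_le (measurable_pi_lambda _ fun _ => measurable_pi_apply _)

lemma coordSigma_mono {A B : Set (Fin d → ℤ)} (h : A ⊆ B) : coordSigma d A ≤ coordSigma d B := by
  change MeasurableSpace.comap
    ((fun (g : B → Bool) (x : A) => g (Set.inclusion h x)) ∘ fun (ω : Cfg d) (y : B) => ω y) _ ≤ _
  rw [← MeasurableSpace.comap_comp]
  exact MeasurableSpace.comap_mono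
    (Measurable.comap_le (measurable_pi_lambda _ fun _ => measurable_pi_apply _))

lemma measurableSet_exists_coord {A : Set (Fin d → ℤ)} (L : ℕ) {p : ℕ → Fin d → ℤ}
    (hp : ∀ j, p j ∈ A) :
    MeasurableSet[coordSigma d A] {ω | ∃ j : ℕ, 1 ≤ j ∧ j ≤ L ∧ ω (p j) = true} := by
  have hcoord : ∀ j, MeasurableSet[coordSigma d A] {ω : Cfg d | ω (p j) = true} := fun j =>
    ⟨(fun g : A → Bool => g ⟨p j, hp j⟩) ⁻¹' {true},
      measurable_pi_apply _ (measurableSet_singleton true), rfl⟩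
  have : {ω : Cfg d | ∃ j : ℕ, 1 ≤ j ∧ j ≤ L ∧ ω (p j) = true}
      = ⋃ j ∈ Set.Icc 1 L, {ω | ω (p j) = true} := by
    ext ω
    simp [and_assoc]
  rw [this]
  exact .biUnion (Set.to_countable _) fun j _ => hcoord j

end Columns

def col (i : ℤ) : Set (Fin 2 → ℤ) := {x | x 0 = i}

def Lam0At (u : ℤ) (L : ℕ) (i : ℤ) : Set (Cfg 2) := shift 2 (i • e1) ⁻¹' Lam0 u L

lemma measurableSet_Lam0At_col (u : ℤ) (L : ℕ) (i : ℤ) :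
    MeasurableSet[coordSigma 2 (col i)] (Lam0At u L i) :=
  measurableSet_exists_coord L (p := fun j => (u - j) • e2 + i • e1) fun j => by
    simp [col, e1, e2]

lemma measurableSet_Lam0At (u : ℤ) (L : ℕ) (i : ℤ) : MeasurableSet (Lam0At u L i) :=
  coordSigma_le _ _ (measurableSet_Lam0At_col u L i)

lemma measurableSet_Lam0 (u : ℤ) (L : ℕ) : MeasurableSet (Lam0 u L) :=
  coordSigma_le _ _ (measurableSet_exists_coord (A := Set.univ) L fun _ => trivial)

lemma measure_Lam0At {Q : Measure (Cfg 2)} (hQ : ∀ y, MeasurePreserving (shift 2 y) Q Q)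
    (u : ℤ) (L : ℕ) (i : ℤ) : Q (Lam0At u L i) = Q (Lam0 0 L) := by
  have : Lam0At u L i = shift 2 (u • e2 + i • e1) ⁻¹' Lam0 0 L := by
    ext ω
    simp only [Lam0At, Lam0, shift, Set.mem_preimage, Set.mem_ofPred_eq]
    congr! 4
    rw [zero_sub, neg_smul, sub_smul]
    abel_nf
  rw [this, (hQ _).measure_preimage (measurableSet_Lam0 0 L).nullMeasurableSet]

lemma iIndep_coordSigma_col {Q : Measure (Cfg 2)} [IsProbabilityMeasure Q] {ℓ : ℝ}
    (hindep : ∀ A B : Set (Fin 2 → ℤ), (∀ x ∈ A, ∀ y ∈ B, ℓ ≤ nrm 2 (x - y)) →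
      Indep (coordSigma 2 A) (coordSigma 2 B) Q)
    {ι : Type*} {c : ι → ℤ} (hc : Pairwise fun i j => ℓ ≤ |((c i - c j : ℤ) : ℝ)|) :
    iIndep (fun i => coordSigma 2 (col (c i))) Q := by
  refine iIndep_of_indep_biSup fun s i hi => indep_of_indep_of_le_right
    (hindep (col (c i)) (⋃ j ∈ s, col (c j)) fun x hx y hy => ?_)
    (iSup₂_le fun j hj => coordSigma_mono (Set.subset_biUnion_of_mem (u := fun j => col (c j)) hj))
  obtain ⟨j, hj, hy⟩ := Set.mem_iUnion₂.1 hy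
  have hxy : (x - y) 0 = c i - c j := by simp only [Pi.sub_apply, hx.symm, hy.symm]
  calc ℓ ≤ |((c i - c j : ℤ) : ℝ)| := hc fun h => hi (h ▸ hj)
    _ ≤ nrm 2 (x - y) := hxy ▸ abs_apply_le_nrm (x - y) 0

lemma iIndepSet_Lam0At {Q : Measure (Cfg 2)} [IsProbabilityMeasure Q] {ℓ : ℝ}
    (hindep : ∀ A B : Set (Fin 2 → ℤ), (∀ x ∈ A, ∀ y ∈ B, ℓ ≤ nrm 2 (x - y)) →
      Indep (coordSigma 2 A) (coordSigma 2 B) Q)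
    {ι : Type*} {c : ι → ℤ} (hc : Pairwise fun i j => ℓ ≤ |((c i - c j : ℤ) : ℝ)|)
    (u : ℤ) (L : ℕ) : iIndepSet (fun i => Lam0At u L (c i)) Q :=
  (iIndepSet_iff_iIndep _ _).2 <| iIndep_of_iIndep_of_le (iIndep_coordSigma_col hindep hc)
    fun i => MeasurableSpace.generateFrom_le <| by
      rintro _ rfl
      exact measurableSet_Lam0At_col u L (c i)

lemma sum_card_filter_add_mul_le (P : ℤ → Prop) [DecidablePred P] (a : ℤ) (ℓ m : ℕ) :
    ∑ r ∈ range ℓ, #{k ∈ range m | P (a + r + (k * ℓ : ℕ))}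
      ≤ #{i ∈ Ico a (a + ℓ * m) | P i} := by
  simp only [card_filter]
  rw [← sum_product' (f := fun (r k : ℕ) => if P (a + r + (k * ℓ : ℕ)) then 1 else 0),
    ← card_filter, ← card_filter]
  refine card_le_card_of_injOn (fun rk : ℕ × ℕ => a + ((rk.1 + rk.2 * ℓ : ℕ) : ℤ)) ?_ ?_
  · rintro ⟨r, k⟩ hrk
    simp only [coe_filter, mem_product, mem_range, Set.mem_ofPred_eq] at hrk
    obtain ⟨⟨hr, hk⟩, hP⟩ := hrk
    have : r + k * ℓ < ℓ * m := by nlinarith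
    simp only [coe_filter, mem_Ico, Set.mem_ofPred_eq]
    exact ⟨⟨by omega, by omega⟩, by push_cast; rwa [← add_assoc]⟩
  · rintro ⟨r, k⟩ hrk ⟨r', k'⟩ hrk' h
    simp only [coe_filter, mem_product, mem_range, Set.mem_ofPred_eq] at hrk hrk'
    have h : r + k * ℓ = r' + k' * ℓ := by
      exact_mod_cast (by simpa using h : (r : ℤ) + k * ℓ = r' + k' * ℓ)
    have hk : k = k' := by
      simpa [Nat.add_mul_div_right, Nat.div_eq_of_lt hrk.1.1, Nat.div_eq_of_lt hrk'.1.1,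
        (by omega : 0 < ℓ)] using congrArg (· / ℓ) h
    subst hk
    simp only [Prod.mk.injEq, and_true]
    omega

lemma pairwise_le_abs_add_mul_sub (a : ℤ) (ℓ : ℕ) :
    Pairwise fun k k' : ℕ => (ℓ : ℝ) ≤ |((a + (k * ℓ : ℕ) - (a + (k' * ℓ : ℕ)) : ℤ) : ℝ)| := by
  intro k k' hne
  have hk : (1 : ℤ) ≤ |(k : ℤ) - k'| := Int.one_le_abs (sub_ne_zero.2 (by exact_mod_cast hne))
  have : (ℓ : ℤ) ≤ |a + (k * ℓ : ℕ) - (a + (k' * ℓ : ℕ))| := by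
    rw [show a + (k * ℓ : ℕ) - (a + (k' * ℓ : ℕ)) = ((k : ℤ) - k') * ℓ by push_cast; ring,
      abs_mul, abs_of_nonneg (Int.natCast_nonneg ℓ)]
    nlinarith
  exact_mod_cast this

noncomputable def lam0Count (u : ℤ) (L : ℕ) (a : ℤ) (ℓ m : ℕ) (ω : Cfg 2) : ℕ :=
  #{k ∈ range m | ω ∈ Lam0At u L (a + (k * ℓ : ℕ))}

lemma measure_lam0Count_le {Q : Measure (Cfg 2)} [IsProbabilityMeasure Q]
    (hQ : ∀ y, MeasurePreserving (shift 2 y) Q Q) {ℓ : ℕ}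
    (hindep : ∀ A B : Set (Fin 2 → ℤ), (∀ x ∈ A, ∀ y ∈ B, (ℓ : ℝ) ≤ nrm 2 (x - y)) →
      Indep (coordSigma 2 A) (coordSigma 2 B) Q)
    (u : ℤ) (L : ℕ) (a : ℤ) (m : ℕ) {δ : ℝ} (hδ0 : 0 ≤ δ) (hδ1 : δ < 1) :
    Q {ω | (lam0Count u L a ℓ m ω : ℝ) ≤ (1 - δ) * Q.real (Lam0 0 L) * m}
      ≤ ENNReal.ofReal (Real.exp (-(δ ^ 2 * Q.real (Lam0 0 L) / 2) * m)) := by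
  rw [← ofReal_measureReal]
  refine ENNReal.ofReal_le_ofReal ?_
  have := measureReal_card_le_le_exp
    (iIndepSet_Lam0At hindep (pairwise_le_abs_add_mul_sub a ℓ) u L)
    (fun _ => measurableSet_Lam0At u L _)
    (fun _ => congrArg ENNReal.toReal (measure_Lam0At hQ u L _)) (range m) hδ0 hδ1
  rwa [card_range] at this

lemma natCard_Lam1_set (u : ℤ) (L n : ℕ) (ω : Cfg 2) :
    Nat.card {i : ℤ | -(n : ℤ) ≤ i ∧ i ≤ (n : ℤ) ∧ shift 2 (i • e1) ω ∈ Lam0 u L}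
      = #{i ∈ Icc (-(n : ℤ)) n | ω ∈ Lam0At u L i} := by
  rw [← Set.ncard_coe_finset, ← Nat.card_coe_set_eq]
  congr
  ext i
  simp [Lam0At, and_assoc]

lemma compl_Lam1_subset (u : ℤ) (δ : ℝ) (L n ℓ : ℕ) {c : ℝ}
    (hc : (1 - δ) * (2 * n + 1) < ℓ * (c * ((2 * n + 1) / ℓ : ℕ))) :
    (Lam1 u δ L n)ᶜ ⊆ ⋃ r ∈ range ℓ,
      {ω | (lam0Count u L (-n + r) ℓ ((2 * n + 1) / ℓ) ω : ℝ) ≤ c * ((2 * n + 1) / ℓ : ℕ)} := by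
  intro ω hω
  set m := (2 * n + 1) / ℓ
  simp only [Set.mem_compl_iff, Lam1, Set.mem_ofPred_eq, not_lt, natCard_Lam1_set] at hω
  by_contra hcon
  simp only [Set.mem_iUnion, not_exists, Set.mem_ofPred_eq, not_le] at hcon
  have hclasses : ℓ * (c * m) ≤ ∑ r ∈ range ℓ, (lam0Count u L (-n + r) ℓ m ω : ℝ) := by
    simpa using sum_le_sum fun r hr => (hcon r hr).le
  have hsub : Ico (-(n : ℤ)) (-n + ℓ * m) ⊆ Icc (-(n : ℤ)) n := by
    have : ℓ * m ≤ 2 * n + 1 := Nat.mul_div_le _ _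
    intro i
    simp only [mem_Ico, mem_Icc]
    omega
  have htotal : ∑ r ∈ range ℓ, (lam0Count u L (-n + r) ℓ m ω : ℝ)
      ≤ #{i ∈ Icc (-(n : ℤ)) n | ω ∈ Lam0At u L i} := by
    exact_mod_cast (sum_card_filter_add_mul_le (fun i => ω ∈ Lam0At u L i) (-n) ℓ m).trans
      (card_le_card (filter_subset_filter _ hsub))
  linarith

lemma one_sub_mul_lt_mul_div_mul {δ δ₁ : ℝ} {ℓ N : ℕ} (hℓ : 1 ≤ ℓ) (hδ₁δ : δ₁ < δ)
    (hδ1 : δ < 1) (hN : (1 - δ₁) * ℓ < (δ - δ₁) * N) :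
    (1 - δ) * N < (1 - δ₁) * (ℓ * (N / ℓ : ℕ)) := by
  have hdiv : (N + 1 : ℝ) ≤ ℓ * (N / ℓ : ℕ) + ℓ := by
    exact_mod_cast (Nat.lt_div_mul_add (a := N) (by omega : 0 < ℓ)).trans_eq (by ring)
  nlinarith

theorem chernoff_blocked_columns_general
    (Q : Measure (Cfg 2)) (hQ : Assumptions 2 Q)
    (ℓ : ℕ) (hℓ : 1 ≤ ℓ)
    (hindep : ∀ A B : Set (Fin 2 → ℤ),
      (∀ x ∈ A, ∀ y ∈ B, (ℓ : ℝ) ≤ nrm 2 (x - y)) →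
        Indep (coordSigma 2 A) (coordSigma 2 B) Q)
    (δ δ₁ δ₂ : ℝ) (hδQ : δ < (Q (Omega0 2)).toReal)
    (hδ₁δ : δ₁ < δ) (hδ₂0 : 0 < δ₂) (hδ₂1 : δ₂ < 1)
    (L : ℕ)
    (hchoice : 1 - δ₁ ≤ (1 - δ₂) * (Q (Lam0 0 L)).toReal) :
    ∀ u : ℤ, ∀ n : ℕ, ((1 - δ₁) * (ℓ : ℝ) / (δ - δ₁) - 1) / 2 < (n : ℝ) →
      Q (Lam1 u δ L n)ᶜ
        ≤ ENNReal.ofReal ((ℓ : ℝ) *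
            Real.exp (-(δ₂ ^ 2 * (Q (Lam0 0 L)).toReal / 2) * ((2 * n + 1) / ℓ : ℕ))) := by
  intro u n hn
  have := hQ.prob
  set q := (Q (Lam0 0 L)).toReal
  set m := (2 * n + 1) / ℓ
  have hδ1 : δ < 1 := hδQ.trans_le measureReal_le_one
  have hN : (1 - δ₁) * ℓ < (δ - δ₁) * ((2 * n + 1 : ℕ) : ℝ) := by
    rw [div_sub_one, div_div, div_lt_iff₀] at hn <;> push_cast <;> linarith
  have hgap := one_sub_mul_lt_mul_div_mul hℓ hδ₁δ hδ1 hN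
  have hsub := compl_Lam1_subset u δ L n ℓ (c := (1 - δ₂) * q) (by
    push_cast at hgap
    nlinarith [mul_le_mul_of_nonneg_right hchoice (by positivity : (0 : ℝ) ≤ ℓ * m)])
  calc Q (Lam1 u δ L n)ᶜ
      ≤ ∑ r ∈ range ℓ, Q {ω | (lam0Count u L (-n + r) ℓ m ω : ℝ) ≤ (1 - δ₂) * q * m} :=
        (measure_mono hsub).trans (measure_biUnion_finset_le _ _)
    _ ≤ ∑ _r ∈ range ℓ, ENNReal.ofReal (Real.exp (-(δ₂ ^ 2 * q / 2) * m)) :=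
        sum_le_sum fun r _ => measure_lam0Count_le hQ.a3 hindep u L _ m hδ₂0.le hδ₂1
    _ = _ := by
        rw [sum_const, card_range, nsmul_eq_mul, ENNReal.ofReal_mul (by positivity),
          ENNReal.ofReal_natCast]

/-- **Chernoff bound for blocked vertical columns, `d = 2`.** Under the
stated choices of `δ, δ₁, δ₂, L`, for every `u` and every
`n > ((1-δ₁)ℓ/(δ-δ₁) - 1)/2`,
`Q(Λ₁(u,δ,L,n)^c) ≤ ℓ exp(-(δ₂² Q(Λ₀(0,L))/2) ⌊(2n+1)/ℓ⌋)`. -/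
theorem chernoff_blocked_columns
    (Q : Measure (Cfg 2)) (hQ : Assumptions 2 Q)
    (ℓ : ℕ) (hℓ : 1 ≤ ℓ)
    (hindep : ∀ A B : Set (Fin 2 → ℤ),
      (∀ x ∈ A, ∀ y ∈ B, (ℓ : ℝ) ≤ nrm 2 (x - y)) →
        Indep (coordSigma 2 A) (coordSigma 2 B) Q)
    (δ δ₁ δ₂ : ℝ) (hδ0 : 0 < δ) (hδQ : δ < (Q (Omega0 2)).toReal)
    (hδ₁0 : 0 < δ₁) (hδ₁δ : δ₁ < δ) (hδ₂0 : 0 < δ₂) (hδ₂1 : δ₂ < 1)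
    (L : ℕ) (hL : 2 * ℓ - 1 ≤ L)
    (hchoice : 1 - δ₁ ≤ (1 - δ₂) * (Q (Lam0 0 L)).toReal) :
    ∀ u : ℤ, ∀ n : ℕ, ((1 - δ₁) * (ℓ : ℝ) / (δ - δ₁) - 1) / 2 < (n : ℝ) →
      Q (Lam1 u δ L n)ᶜ
        ≤ ENNReal.ofReal ((ℓ : ℝ) *
            Real.exp (-(δ₂ ^ 2 * (Q (Lam0 0 L)).toReal / 2) * ((2 * n + 1) / ℓ : ℕ))) :=
  chernoff_blocked_columns_general Q hQ ℓ hℓ hindep δ δ₁ δ₂ hδQ hδ₁δ hδ₂0 hδ₂1 L hchoice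

end RWDPP
end
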